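/- arXiv:2505.02834 — 6 statements merged into one kernel-verified Lean document; each statement's English description precedes it below -/
import Mathlib

section
/- Let λ₁,…,λ_d ∈ [-1,1]. Then there exists a 2d×4d real matrix Q such that QQ^T = I_{2d} and Q · (⊕_{j=1}^{2d} J₂) · Q^T = ⊕_{j=1}^{d} [[0, λ_j], [-λ_j, 0]], where J₂ = [[0,1],[-1,0]]. -/
/-!
Write `λⱼ = cos θⱼ` and put `cⱼ = cos (θⱼ / 2)`, `sⱼ = sin (θⱼ / 2)`. Split the `2d` blocks of
`ℝ⁴ᵈ` into two halves of `d` blocks and let the `j`-th block row of `Q` be `cⱼ` times the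
identity on block `j` of the first half plus `sⱼ · diag(1, -1)` on block `j` of the second half.
The two halves are orthogonal, so `Q Qᵀ = diag(cⱼ² + sⱼ²) = 1`, and since
`diag(1, -1) J₂ diag(1, -1) = -J₂`, the form becomes `(cⱼ² - sⱼ²) J₂ = λⱼ J₂` on block `j`.
-/

open Matrix Kronecker

namespace Matrix

variable {l n m R : Type*} [CommRing R] [Fintype l] [Fintype m]

theorem kronecker_add_kronecker_mul_kronecker_one_mul_transpose [DecidableEq m]
    (τ σ M : Matrix l l R) (U V : Matrix n m R) (hUV : U * Vᵀ = 0) :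
    (τ ⊗ₖ U + σ ⊗ₖ V) * (M ⊗ₖ (1 : Matrix m m R)) * (τ ⊗ₖ U + σ ⊗ₖ V)ᵀ =
      (τ * M * τᵀ) ⊗ₖ (U * Uᵀ) + (σ * M * σᵀ) ⊗ₖ (V * Vᵀ) := by
  have hVU : (V * Uᵀ : Matrix n n R) = 0 := by
    rw [← transpose_transpose V, ← transpose_mul, hUV, transpose_zero]
  simp only [transpose_add, ← kroneckerMap_transpose, Matrix.add_mul, Matrix.mul_add,
    ← mul_kronecker_mul, Matrix.mul_one, hUV, hVU, kronecker_zero, add_zero, zero_add]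

theorem one_submatrix_mul_transpose_one_submatrix [DecidableEq m] (f g : n → m) :
    (1 : Matrix m m R).submatrix f id * ((1 : Matrix m m R).submatrix g id)ᵀ =
      (1 : Matrix m m R).submatrix f g := by
  rw [transpose_submatrix, transpose_one, ← submatrix_mul _ _ _ _ _ Function.bijective_id,
    Matrix.mul_one]

theorem blockDiagonal_skew_eq_kronecker_diagonal [DecidableEq n] (a : n → R) :
    blockDiagonal (fun j => !![0, a j; -(a j), 0]) = !![(0 : R), 1; -1, 0] ⊗ₖ diagonal a := by
  rw [kronecker_diagonal]
  congr 1
  ext j i k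
  fin_cases i <;> fin_cases k <;> simp

variable [Fintype n] [DecidableEq m] [DecidableEq n]

theorem diagonal_mul_one_submatrix_mul_transpose (c s : n → R) (f g : n → m) :
    diagonal c * (1 : Matrix m m R).submatrix f id *
        (diagonal s * (1 : Matrix m m R).submatrix g id)ᵀ =
      diagonal c * (1 : Matrix m m R).submatrix f g * diagonal s := by
  rw [transpose_mul, diagonal_transpose, ← one_submatrix_mul_transpose_one_submatrix]
  simp only [Matrix.mul_assoc]

/-- Row `(i, j)` is `c j • e_(i, e (inl j)) + (-1)^i s j • e_(i, e (inr j))`. -/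
def mixMatrix (e : n ⊕ n ↪ m) (c s : n → R) : Matrix (Fin 2 × n) (Fin 2 × m) R :=
  1 ⊗ₖ (diagonal c * (1 : Matrix m m R).submatrix (e ∘ Sum.inl) id) +
    diagonal ![1, -1] ⊗ₖ (diagonal s * (1 : Matrix m m R).submatrix (e ∘ Sum.inr) id)

theorem mixMatrix_mul_kronecker_one_mul_transpose (e : n ⊕ n ↪ m) (c s : n → R)
    (M : Matrix (Fin 2) (Fin 2) R) :
    mixMatrix e c s * (M ⊗ₖ (1 : Matrix m m R)) * (mixMatrix e c s)ᵀ =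
      M ⊗ₖ diagonal (fun i => c i ^ 2) +
        (diagonal ![1, -1] * M * diagonal ![1, -1]) ⊗ₖ diagonal (fun i => s i ^ 2) := by
  have hdisj : (1 : Matrix m m R).submatrix (e ∘ Sum.inl) (e ∘ Sum.inr) = 0 := by
    ext i j
    simp
  rw [mixMatrix, kronecker_add_kronecker_mul_kronecker_one_mul_transpose]
  · simp only [diagonal_mul_one_submatrix_mul_transpose,
      submatrix_one _ (e.injective.comp Sum.inl_injective),
      submatrix_one _ (e.injective.comp Sum.inr_injective), Matrix.mul_one, diagonal_mul_diagonal,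
      transpose_one, Matrix.one_mul, diagonal_transpose, sq]
  · rw [diagonal_mul_one_submatrix_mul_transpose, hdisj, Matrix.mul_zero, Matrix.zero_mul]

theorem mixMatrix_mul_transpose (e : n ⊕ n ↪ m) {c s : n → R}
    (h : ∀ i, c i ^ 2 + s i ^ 2 = 1) : mixMatrix e c s * (mixMatrix e c s)ᵀ = 1 := by
  have hσ : (diagonal ![1, -1] * 1 * diagonal ![1, -1] : Matrix (Fin 2) (Fin 2) R) = 1 := by
    rw [Matrix.mul_one, diagonal_mul_diagonal, ← diagonal_one]
    congr 1
    ext i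
    fin_cases i <;> simp
  have := mixMatrix_mul_kronecker_one_mul_transpose e c s 1
  rw [one_kronecker_one, Matrix.mul_one, hσ, ← kronecker_add, diagonal_add] at this
  simpa [h] using this

theorem mixMatrix_mul_skew_kronecker_one_mul_transpose (e : n ⊕ n ↪ m) (c s : n → R) :
    mixMatrix e c s * (!![0, 1; -1, 0] ⊗ₖ (1 : Matrix m m R)) * (mixMatrix e c s)ᵀ =
      !![0, 1; -1, 0] ⊗ₖ diagonal (fun i => c i ^ 2 - s i ^ 2) := by
  have hσ : (diagonal ![1, -1] * !![0, 1; -1, 0] * diagonal ![1, -1] : Matrix (Fin 2) (Fin 2) R) =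
      (-1 : R) • !![0, 1; -1, 0] := by
    ext i j
    fin_cases i <;> fin_cases j <;> simp
  rw [mixMatrix_mul_kronecker_one_mul_transpose, hσ, smul_kronecker, ← kronecker_smul,
    ← kronecker_add, ← diagonal_smul, diagonal_add]
  congr 2
  ext i
  simp [sub_eq_add_neg]

end Matrix

theorem stmt_1 (d : ℕ) (lam : Fin d → ℝ) (hlam : ∀ j, lam j ∈ Set.Icc (-1 : ℝ) 1) :
    ∃ Q : Matrix (Fin 2 × Fin d) (Fin 2 × Fin (2 * d)) ℝ,
      Q * Qᵀ = 1 ∧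
      Q * Matrix.blockDiagonal (fun _ : Fin (2 * d) => (!![0, 1; -1, 0] : Matrix (Fin 2) (Fin 2) ℝ)) * Qᵀ
        = Matrix.blockDiagonal (fun j : Fin d => (!![0, lam j; -(lam j), 0] : Matrix (Fin 2) (Fin 2) ℝ)) := by
  let e : Fin d ⊕ Fin d ↪ Fin (2 * d) :=
    (finSumFinEquiv.trans (finCongr (two_mul d).symm)).toEmbedding
  let θ : Fin d → ℝ := fun j => Real.arccos (lam j) / 2
  have hcos : ∀ j, Real.cos (θ j) ^ 2 - Real.sin (θ j) ^ 2 = lam j := fun j => by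
    rw [← Real.cos_two_mul', mul_div_cancel₀ _ two_ne_zero, Real.cos_arccos (hlam j).1 (hlam j).2]
  refine ⟨mixMatrix e (Real.cos ∘ θ) (Real.sin ∘ θ),
    mixMatrix_mul_transpose e fun j => Real.cos_sq_add_sin_sq _, ?_⟩
  rw [← kronecker_one, mixMatrix_mul_skew_kronecker_one_mul_transpose,
    blockDiagonal_skew_eq_kronecker_diagonal]
  simp only [Function.comp_apply, hcos]
end

section
/- Let A ∈ M_d(ℝ) be a positive semidefinite matrix with operator norm at most 1 (a positive contraction). Then there exists Q ∈ M_{2d×4d}(ℝ) with QQ^T = I_{2d} and Q J_{4d} Q^T = [[0, A], [-A, 0]], where J_{4d} = [[0, I_{2d}], [-I_{2d}, 0]]. -/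
/-!
Since `0 ≤ A ≤ 1`, also `A ^ 2 ≤ 1`, so `1 - A ^ 2 = C Cᵀ` for some `C`. Splitting the columns
of `Q` into two halves `Q = [X | Y]`, we have `Q J Qᵀ = X Yᵀ - Y Xᵀ`, and the choice
`X = [[1, 0], [0, C]]`, `Y = [[0, 0], [A, 0]]` gives `Q Qᵀ = diag(1, C Cᵀ + A²) = 1` and
`Q J Qᵀ = [[0, A], [-A, 0]]`.
-/

open Matrix

namespace Matrix

variable {l m n o l' m' n' o' R : Type*}

lemma fromBlocks_submatrix_sum_map (A : Matrix n l R) (B : Matrix n m R) (C : Matrix o l R)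
    (D : Matrix o m R) (f : n' → n) (g : o' → o) (h : l' → l) (k : m' → m) :
    (fromBlocks A B C D).submatrix (Sum.map f g) (Sum.map h k) =
      fromBlocks (A.submatrix f h) (B.submatrix f k) (C.submatrix g h) (D.submatrix g k) := by
  ext (i | i) (j | j) <;> rfl

lemma submatrix_mul_mul_transpose_submatrix [Fintype n] [Fintype n'] [Semiring R]
    (Q : Matrix m n R) (J : Matrix n n R) (σ : n' ≃ n) :
    Q.submatrix id σ * J.submatrix σ σ * (Q.submatrix id σ)ᵀ = Q * J * Qᵀ := by
  rw [transpose_submatrix, submatrix_mul_equiv, submatrix_mul_equiv, submatrix_id_id]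

section RCLike

open scoped ComplexOrder

variable {𝕜 : Type*} [RCLike 𝕜] [Fintype n] [DecidableEq n]

open scoped MatrixOrder in
lemma PosSemidef.exists_mul_conjTranspose_eq {M : Matrix n n 𝕜} (hM : M.PosSemidef) :
    ∃ C : Matrix n n 𝕜, C * Cᴴ = M :=
  ⟨CFC.sqrt M, by
    rw [(CFC.sqrt_nonneg M).posSemidef.isHermitian.eq, CFC.sqrt_mul_sqrt_self M hM.nonneg]⟩

lemma posSemidef_one_sub_mul_self {A : Matrix n n 𝕜} (hA : A.PosSemidef)
    (hA1 : (1 - A).PosSemidef) : (1 - A * A).PosSemidef := by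
  have key : 1 - A * A = (1 - A) + ((1 - A) * A * (1 - A)ᴴ + A * (1 - A) * Aᴴ) := by
    rw [hA.isHermitian.eq, hA1.isHermitian.eq]
    noncomm_ring
  rw [key]
  exact hA1.add ((hA.mul_mul_conjTranspose_same _).add (hA1.mul_mul_conjTranspose_same _))

end RCLike

variable [Fintype n] [DecidableEq n] [Ring R]

def symplecticDilation (A C : Matrix n n R) : Matrix (n ⊕ n) ((n ⊕ n) ⊕ (n ⊕ n)) R :=
  fromBlocks (fromCols 1 0) 0 (fromCols 0 C) (fromCols A 0)

lemma symplecticDilation_mul_transpose {A C : Matrix n n R} (h : A * Aᵀ + C * Cᵀ = 1) :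
    symplecticDilation A C * (symplecticDilation A C)ᵀ = 1 := by
  simp [symplecticDilation, fromBlocks_transpose, fromBlocks_multiply, transpose_fromCols,
    fromCols_mul_fromRows, add_comm (C * Cᵀ), h, ← fromBlocks_one]

lemma symplecticDilation_mul_mul_transpose (A C : Matrix n n R) :
    symplecticDilation A C *
        (fromBlocks 0 1 (-1) 0 : Matrix ((n ⊕ n) ⊕ (n ⊕ n)) ((n ⊕ n) ⊕ (n ⊕ n)) R) *
        (symplecticDilation A C)ᵀ =
      fromBlocks 0 Aᵀ (-A) 0 := by
  simp [symplecticDilation, fromBlocks_transpose, fromBlocks_multiply, transpose_fromCols,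
    fromCols_mul_fromRows]

end Matrix

theorem stmt_2 (d : ℕ) (A : Matrix (Fin d) (Fin d) ℝ)
    (hA : A.PosSemidef) (hA1 : ((1 : Matrix (Fin d) (Fin d) ℝ) - A).PosSemidef) :
    ∃ Q : Matrix (Fin d ⊕ Fin d) (Fin (2 * d) ⊕ Fin (2 * d)) ℝ,
      Q * Qᵀ = 1 ∧
      Q * (Matrix.fromBlocks 0 1 (-1) 0 : Matrix (Fin (2 * d) ⊕ Fin (2 * d)) (Fin (2 * d) ⊕ Fin (2 * d)) ℝ) * Qᵀ
        = Matrix.fromBlocks 0 A (-A) 0 := by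
  have hAsymm : Aᵀ = A := (isHermitian_iff_isSymm.mp hA.isHermitian).eq
  obtain ⟨C, hC⟩ := (posSemidef_one_sub_mul_self hA hA1).exists_mul_conjTranspose_eq
  rw [conjTranspose_eq_transpose_of_trivial] at hC
  let e : Fin (2 * d) ≃ Fin d ⊕ Fin d := (finCongr (two_mul d)).trans finSumFinEquiv.symm
  let σ := Equiv.sumCongr e e
  have hJ : (fromBlocks 0 1 (-1) 0 : Matrix (Fin (2 * d) ⊕ Fin (2 * d)) _ ℝ) =
      (fromBlocks 0 1 (-1) 0).submatrix σ σ := by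
    change _ = (fromBlocks 0 1 (-1) 0).submatrix (Sum.map e e) (Sum.map e e)
    simp [fromBlocks_submatrix_sum_map, submatrix_neg, submatrix_one_equiv]
  refine ⟨(symplecticDilation A C).submatrix id σ, ?_, ?_⟩
  · have h := submatrix_mul_mul_transpose_submatrix (symplecticDilation A C) 1 σ
    rw [submatrix_one_equiv, Matrix.mul_one, Matrix.mul_one] at h
    rw [h, symplecticDilation_mul_transpose (by rw [hAsymm, hC, add_sub_cancel])]
  · rw [hJ, submatrix_mul_mul_transpose_submatrix, symplecticDilation_mul_mul_transpose, hAsymm]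
end

section
/- Suppose L = [[X, L₁₂], [L₂₁, L₂₂]] ∈ M_{2(d+d')}(ℝ) is (J_{2d} ⊕ J_{2d'})-symplectic, with X ∈ M_{2d}(ℝ), L₂₁ ∈ M_{2d'×2d}(ℝ), and set Y = L₂₁^T L₂₁. Then the complex Hermitian matrix Y + i(J_{2d} - X^T J_{2d} X) is positive semidefinite. -/
/-!
Comparing top-left blocks of `Lᵀ (J ⊕ J') L = J ⊕ J'` gives `J - Xᵀ J X = L₂₁ᵀ J' L₂₁`, so the
matrix in question is the congruence `L₂₁ᴴ (1 + i J') L₂₁`. Since `J'` is real, skew-symmetric and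
squares to `-1`, `(1 + i J') / 2` is an orthogonal projection, hence `1 + i J'` is positive
semidefinite, and so is every congruence of it.
-/

open Matrix
open scoped ComplexOrder

theorem posSemidef_one_add_I_smul_of_conjTranspose_eq_neg {n : Type*} [Fintype n] [DecidableEq n]
    {K : Matrix n n ℂ} (hK : Kᴴ = -K) (hK2 : K * K = -1) :
    (1 + Complex.I • K).PosSemidef := by
  set M := 1 + Complex.I • K
  have hM : Mᴴ = M := by
    simp [M, conjTranspose_smul, hK, Complex.conj_I]
  have hMM : Mᴴ * M = (2 : ℂ) • M := by
    rw [hM]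
    simp only [M, add_mul, mul_add, Matrix.one_mul, Matrix.mul_one, smul_mul_smul_comm,
      Complex.I_mul_I, hK2]
    module
  have h := (posSemidef_conjTranspose_mul_self M).smul (inv_nonneg.mpr (zero_le_two : (0 : ℂ) ≤ 2))
  rwa [hMM, smul_smul, inv_mul_cancel₀ two_ne_zero, one_smul] at h

theorem conjTranspose_map_ofReal {m n : Type*} (B : Matrix m n ℝ) :
    (B.map Complex.ofReal)ᴴ = Bᵀ.map Complex.ofReal := by
  rw [← conjTranspose_map _ (fun _ => (Complex.conj_ofReal _).symm),
    conjTranspose_eq_transpose_of_trivial]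

theorem posSemidef_one_add_I_smul_map_ofReal {n : Type*} [Fintype n] [DecidableEq n]
    {K : Matrix n n ℝ} (hK : Kᵀ = -K) (hK2 : K * K = -1) :
    (1 + Complex.I • K.map Complex.ofReal).PosSemidef := by
  refine posSemidef_one_add_I_smul_of_conjTranspose_eq_neg ?_ ?_
  · rw [conjTranspose_map_ofReal, hK, Matrix.map_neg _ Complex.ofReal_neg]
  · refine (Matrix.map_mul (f := Complex.ofRealHom)).symm.trans ?_
    rw [hK2, Matrix.map_neg _ (map_neg _), Matrix.map_one _ (map_zero _) (map_one _)]

theorem map_ofReal_transpose_mul_mul {m n : Type*} [Fintype m]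
    (B : Matrix m n ℝ) (P : Matrix m m ℝ) :
    (Bᵀ * P * B).map Complex.ofReal
      = (B.map Complex.ofReal)ᴴ * P.map Complex.ofReal * B.map Complex.ofReal := by
  rw [conjTranspose_map_ofReal]
  exact (Matrix.map_mul (f := Complex.ofRealHom)).trans
    (congrArg (· * _) (Matrix.map_mul (f := Complex.ofRealHom)))

theorem fromBlocks_zero_one_neg_one_zero_eq_neg_J (l R : Type*) [CommRing R] [DecidableEq l] :
    (fromBlocks 0 1 (-1) 0 : Matrix (l ⊕ l) (l ⊕ l) R) = -J l R := by
  simp [J, fromBlocks_neg]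

theorem stmt_10 (d d' : ℕ)
    (X : Matrix (Fin d ⊕ Fin d) (Fin d ⊕ Fin d) ℝ)
    (L₁₂ : Matrix (Fin d ⊕ Fin d) (Fin d' ⊕ Fin d') ℝ)
    (L₂₁ : Matrix (Fin d' ⊕ Fin d') (Fin d ⊕ Fin d) ℝ)
    (L₂₂ : Matrix (Fin d' ⊕ Fin d') (Fin d' ⊕ Fin d') ℝ) :
    let J : Matrix (Fin d ⊕ Fin d) (Fin d ⊕ Fin d) ℝ := Matrix.fromBlocks 0 1 (-1) 0
    let J' : Matrix (Fin d' ⊕ Fin d') (Fin d' ⊕ Fin d') ℝ := Matrix.fromBlocks 0 1 (-1) 0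
    let L := Matrix.fromBlocks X L₁₂ L₂₁ L₂₂
    Lᵀ * Matrix.fromBlocks J 0 0 J' * L = Matrix.fromBlocks J 0 0 J' →
      ((L₂₁ᵀ * L₂₁).map Complex.ofReal
        + Complex.I • ((J - Xᵀ * J * X).map Complex.ofReal)).PosSemidef := by
  intro J J' L h
  have hblock : J - Xᵀ * J * X = L₂₁ᵀ * J' * L₂₁ := by
    have h₁₁ := congrArg toBlocks₁₁ h
    simp only [L, fromBlocks_transpose, fromBlocks_multiply, toBlocks_fromBlocks₁₁,
      Matrix.mul_zero, add_zero, zero_add] at h₁₁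
    exact (eq_sub_of_add_eq' h₁₁).symm
  set A := L₂₁.map Complex.ofReal
  have hfactor : (L₂₁ᵀ * L₂₁).map Complex.ofReal + Complex.I • (L₂₁ᵀ * J' * L₂₁).map Complex.ofReal
      = Aᴴ * (1 + Complex.I • J'.map Complex.ofReal) * A := by
    have hY : (L₂₁ᵀ * L₂₁).map Complex.ofReal = Aᴴ * A := by
      simpa using map_ofReal_transpose_mul_mul L₂₁ 1
    rw [hY, map_ofReal_transpose_mul_mul, Matrix.mul_add, Matrix.add_mul, Matrix.mul_one,
      Matrix.mul_smul, Matrix.smul_mul]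
  have hJ' : J' = -Matrix.J (Fin d') ℝ := fromBlocks_zero_one_neg_one_zero_eq_neg_J _ _
  rw [hblock, hfactor]
  refine (posSemidef_one_add_I_smul_map_ofReal ?_ ?_).conjTranspose_mul_mul_same A
  · rw [hJ', transpose_neg, J_transpose]
  · rw [hJ', neg_mul_neg, J_squared]
end

section
/- Let X, Y ∈ M_{2d}(ℝ) with Y symmetric and assume Y + i(J_{2d} - X^T J_{2d} X) ≥ 0 (positive semidefinite as a complex matrix). Then there exists L₂₁ ∈ M_{4d×2d}(ℝ) such that L₂₁^T L₂₁ = Y and L₂₁^T J_{4d} L₂₁ = J_{2d} - X^T J_{2d} X. -/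
/-!
Factor the positive semidefinite matrix `Y + iK` as `BᴴB` and split `B = P + iQ` into real and
imaginary parts. Then `Y = PᵀP + QᵀQ` and `K = PᵀQ - QᵀP`, which are the Gram matrix and the
`J`-form of the stacked matrix `[P; Q]`; no limiting argument over singular `Y` is needed.
-/

open Matrix Complex
open scoped ComplexOrder

namespace Matrix

variable {m n R : Type*}

section Symplectic

variable [Fintype m] [CommRing R]

theorem fromRows_transpose_mul_fromRows (P Q : Matrix m n R) :
    (fromRows P Q)ᵀ * fromRows P Q = Pᵀ * P + Qᵀ * Q := by
  rw [transpose_fromRows, fromCols_mul_fromRows]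

theorem fromRows_transpose_mul_fromBlocks_mul_fromRows [DecidableEq m] (P Q : Matrix m n R) :
    (fromRows P Q)ᵀ * (fromBlocks 0 1 (-1) 0 : Matrix (m ⊕ m) (m ⊕ m) R) * fromRows P Q =
      Pᵀ * Q - Qᵀ * P := by
  rw [Matrix.mul_assoc, fromBlocks_mul_fromRows, transpose_fromRows, fromCols_mul_fromRows]
  simp [sub_eq_add_neg]

end Symplectic

theorem map_re_add_I_smul (A C : Matrix m n ℝ) :
    (A.map ofReal + I • C.map ofReal).map re = A := by
  ext; simp

theorem map_im_add_I_smul (A C : Matrix m n ℝ) :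
    (A.map ofReal + I • C.map ofReal).map im = C := by
  ext; simp

theorem conjTranspose_mul_self_eq_re_im [Fintype m] (B : Matrix m n ℂ) :
    Bᴴ * B = ((B.map re)ᵀ * B.map re + (B.map im)ᵀ * B.map im).map ofReal +
      I • ((B.map re)ᵀ * B.map im - (B.map im)ᵀ * B.map re).map ofReal := by
  ext j k
  apply Complex.ext <;> simp [mul_apply, Finset.sum_add_distrib, sub_eq_add_neg]

theorem exists_fromRows_factor_of_posSemidef [Fintype m] [DecidableEq m] [Fintype n]
    [DecidableEq n] (e : m ≃ n) {Y K : Matrix n n ℝ} (h : (Y.map ofReal + I • K.map ofReal).PosSemidef) :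
    ∃ L : Matrix (m ⊕ m) n ℝ,
      Lᵀ * L = Y ∧ Lᵀ * (fromBlocks 0 1 (-1) 0 : Matrix (m ⊕ m) (m ⊕ m) ℝ) * L = K := by
  obtain ⟨B, hB⟩ := by
    open MatrixOrder in exact CStarAlgebra.nonneg_iff_eq_star_mul_self.mp h.nonneg
  set B' := B.submatrix e id
  have hB' : B'ᴴ * B' = Bᴴ * B := by
    rw [conjTranspose_submatrix, submatrix_mul_equiv, submatrix_id_id]
  rw [star_eq_conjTranspose, ← hB', conjTranspose_mul_self_eq_re_im] at hB
  refine ⟨fromRows (B'.map re) (B'.map im), ?_, ?_⟩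
  · rw [fromRows_transpose_mul_fromRows]
    simpa only [map_re_add_I_smul] using congrArg (map · re) hB.symm
  · rw [fromRows_transpose_mul_fromBlocks_mul_fromRows]
    simpa only [map_im_add_I_smul] using congrArg (map · im) hB.symm

end Matrix

theorem stmt_12_general (d : ℕ) (X Y : Matrix (Fin d ⊕ Fin d) (Fin d ⊕ Fin d) ℝ)
    (hpos : let J : Matrix (Fin d ⊕ Fin d) (Fin d ⊕ Fin d) ℝ := Matrix.fromBlocks 0 1 (-1) 0
      (Y.map Complex.ofReal + Complex.I • ((J - Xᵀ * J * X).map Complex.ofReal)).PosSemidef) :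
    let J : Matrix (Fin d ⊕ Fin d) (Fin d ⊕ Fin d) ℝ := Matrix.fromBlocks 0 1 (-1) 0
    let J4 : Matrix (Fin (2 * d) ⊕ Fin (2 * d)) (Fin (2 * d) ⊕ Fin (2 * d)) ℝ :=
      Matrix.fromBlocks 0 1 (-1) 0
    ∃ L₂₁ : Matrix (Fin (2 * d) ⊕ Fin (2 * d)) (Fin d ⊕ Fin d) ℝ,
      L₂₁ᵀ * L₂₁ = Y ∧ L₂₁ᵀ * J4 * L₂₁ = J - Xᵀ * J * X :=
  exists_fromRows_factor_of_posSemidef ((finCongr (two_mul d)).trans finSumFinEquiv.symm) hpos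

theorem stmt_12 (d : ℕ) (X Y : Matrix (Fin d ⊕ Fin d) (Fin d ⊕ Fin d) ℝ) (hY : Yᵀ = Y)
    (hpos : let J : Matrix (Fin d ⊕ Fin d) (Fin d ⊕ Fin d) ℝ := Matrix.fromBlocks 0 1 (-1) 0
      (Y.map Complex.ofReal + Complex.I • ((J - Xᵀ * J * X).map Complex.ofReal)).PosSemidef) :
    let J : Matrix (Fin d ⊕ Fin d) (Fin d ⊕ Fin d) ℝ := Matrix.fromBlocks 0 1 (-1) 0
    let J4 : Matrix (Fin (2 * d) ⊕ Fin (2 * d)) (Fin (2 * d) ⊕ Fin (2 * d)) ℝ :=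
      Matrix.fromBlocks 0 1 (-1) 0
    ∃ L₂₁ : Matrix (Fin (2 * d) ⊕ Fin (2 * d)) (Fin d ⊕ Fin d) ℝ,
      L₂₁ᵀ * L₂₁ = Y ∧ L₂₁ᵀ * J4 * L₂₁ = J - Xᵀ * J * X :=
  stmt_12_general d X Y hpos
end

section
/- Let X, Y ∈ M_d(ℝ) with Y positive semidefinite. There exists an orthosymplectic matrix L = [[X, B], [-B, X]] ∈ M_{2d}(ℝ) with B^T B = Y if and only if X^T X + Y = I and X^T Q √Y is symmetric for some orthogonal matrix Q ∈ M_d(ℝ). -/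
/-! [[X, B], [-B, X]] is the real form of the complex matrix X - iB, so it commutes with J, and
J² = -1; hence it is symplectic exactly when it is orthogonal, i.e. when XᵀX + BᵀB = 1 and XᵀB is
symmetric. A matrix B with BᵀB = Y has the polar decomposition B = Q√Y with Q orthogonal, since
√Y x ↦ B x is a well-defined isometry on the range of √Y that extends to the whole space;
conversely (Q√Y)ᵀ(Q√Y) = Y for every orthogonal Q. -/

open Matrix

noncomputable def Matrix.PosSemidef.sqrt {n : Type*} [Fintype n] [DecidableEq n] {A : Matrix n n ℝ}
    (hA : A.PosSemidef) : Matrix n n ℝ :=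
  hA.1.eigenvectorUnitary.1 * diagonal ((↑) ∘ (√·) ∘ hA.1.eigenvalues) *
    (star hA.1.eigenvectorUnitary : Matrix n n ℝ)

theorem LinearMap.exists_linearIsometry_comp_eq_of_norm_eq {𝕜 V W : Type*} [RCLike 𝕜]
    [AddCommGroup V] [Module 𝕜 V] [NormedAddCommGroup W] [InnerProductSpace 𝕜 W]
    [FiniteDimensional 𝕜 W] (p b : V →ₗ[𝕜] W) (h : ∀ x, ‖b x‖ = ‖p x‖) :
    ∃ Q : W →ₗᵢ[𝕜] W, ∀ x, Q (p x) = b x := by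
  have hker : LinearMap.ker p ≤ LinearMap.ker b := fun x hx ↦ by
    rw [LinearMap.mem_ker] at hx ⊢
    rw [← norm_eq_zero, h x, hx, norm_zero]
  let g : LinearMap.range p →ₗ[𝕜] W := (LinearMap.ker p).liftQ b hker ∘ₗ p.quotKerEquivRange.symm
  have hg : ∀ x, g ⟨p x, LinearMap.mem_range_self p x⟩ = b x := fun x ↦ by
    simp [g, p.quotKerEquivRange_symm_apply_image]
  let L : LinearMap.range p →ₗᵢ[𝕜] W :=
    { toLinearMap := g
      norm_map' := by
        rintro ⟨-, x, rfl⟩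
        simp only [hg, h]
        rfl }
  exact ⟨L.extend, fun x ↦ (L.extend_apply ⟨p x, _⟩).trans (hg x)⟩

theorem Matrix.exists_mul_eq_of_conjTranspose_mul_self_eq {𝕜 n : Type*} [RCLike 𝕜] [Fintype n]
    [DecidableEq n] {A B : Matrix n n 𝕜} (h : Aᴴ * A = Bᴴ * B) :
    ∃ U : Matrix n n 𝕜, Uᴴ * U = 1 ∧ B = U * A := by
  let a := toEuclideanCLM (n := n) (𝕜 := 𝕜) A
  let b := toEuclideanCLM (n := n) (𝕜 := 𝕜) B
  have hab : ∀ x, ‖b x‖ = ‖a x‖ := fun x ↦ by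
    have : star a * a = star b * b := by
      simp only [a, b, ← map_star, ← map_mul, star_eq_conjTranspose, h]
    rw [ContinuousLinearMap.apply_norm_eq_sqrt_inner_adjoint_left,
      ContinuousLinearMap.apply_norm_eq_sqrt_inner_adjoint_left]
    exact congr(√(RCLike.re (inner 𝕜 ($this.symm x) x)))
  obtain ⟨Q, hQ⟩ := LinearMap.exists_linearIsometry_comp_eq_of_norm_eq a.toLinearMap b hab
  let e := toEuclideanCLM (n := n) (𝕜 := 𝕜)
  refine ⟨e.symm Q.toContinuousLinearMap, EquivLike.injective e ?_, EquivLike.injective e ?_⟩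
  · rw [← star_eq_conjTranspose, map_mul, map_star, e.apply_symm_apply, map_one]
    exact Q.adjoint_comp_self
  · rw [map_mul, e.apply_symm_apply]
    ext1 x
    exact (hQ x).symm

theorem Matrix.transpose_mul_mul_self_eq_iff_of_commute {m R : Type*} [Fintype m] [DecidableEq m]
    [Ring R] {L K : Matrix m m R} (hK : K * K = -1) (hLK : Commute L K) :
    Lᵀ * K * L = K ↔ Lᵀ * L = 1 := by
  rw [mul_assoc, ← hLK.eq, ← mul_assoc]
  refine ⟨fun h ↦ ?_, fun h ↦ by rw [h, one_mul]⟩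
  calc Lᵀ * L = -(Lᵀ * L * K * K) := by rw [mul_assoc _ K, hK, mul_neg_one, neg_neg]
    _ = 1 := by rw [h, hK, neg_neg]

namespace Matrix.PosSemidef

variable {n : Type*} [Fintype n] [DecidableEq n] {A : Matrix n n ℝ}

theorem sqrt_eq_cfc (hA : A.PosSemidef) : hA.sqrt = cfc Real.sqrt A := by
  rw [hA.1.cfc_eq, IsHermitian.cfc, Unitary.conjStarAlgAut_apply]
  rfl

theorem transpose_sqrt (hA : A.PosSemidef) : hA.sqrtᵀ = hA.sqrt := by
  rw [sqrt_eq_cfc, ← conjTranspose_eq_transpose_of_trivial]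
  exact (cfc_predicate Real.sqrt A : IsSelfAdjoint _)

theorem sqrt_mul_sqrt (hA : A.PosSemidef) : hA.sqrt * hA.sqrt = A := by
  rw [sqrt_eq_cfc, ← cfc_mul ..]
  conv_rhs => rw [← cfc_id' ℝ A (ha := hA.1)]
  exact cfc_congr fun x hx ↦
    Real.mul_self_sqrt ((posSemidef_iff_isHermitian_and_spectrum_nonneg.mp hA).2 hx)

theorem exists_mul_sqrt_eq (hA : A.PosSemidef) {B : Matrix n n ℝ} (hB : Bᵀ * B = A) :
    ∃ Q : Matrix n n ℝ, Qᵀ * Q = 1 ∧ B = Q * hA.sqrt := by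
  simp only [← conjTranspose_eq_transpose_of_trivial] at hB ⊢
  refine Matrix.exists_mul_eq_of_conjTranspose_mul_self_eq ?_
  rw [conjTranspose_eq_transpose_of_trivial, hA.transpose_sqrt, hA.sqrt_mul_sqrt, hB]

theorem transpose_mul_self_of_mul_sqrt (hA : A.PosSemidef) {Q : Matrix n n ℝ} (hQ : Qᵀ * Q = 1) :
    (Q * hA.sqrt)ᵀ * (Q * hA.sqrt) = A := by
  rw [transpose_mul, hA.transpose_sqrt, mul_assoc, ← mul_assoc Qᵀ, hQ, one_mul, hA.sqrt_mul_sqrt]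

end Matrix.PosSemidef

section Orthosymplectic

variable {n : Type*} [Fintype n] [DecidableEq n]

theorem Matrix.fromBlocks_transpose_mul_self_eq_one_iff {R : Type*} [CommRing R]
    (X B : Matrix n n R) :
    (fromBlocks X B (-B) X)ᵀ * fromBlocks X B (-B) X = 1 ↔
      Xᵀ * X + Bᵀ * B = 1 ∧ (Xᵀ * B).IsSymm := by
  rw [fromBlocks_transpose, fromBlocks_multiply, ← fromBlocks_one, fromBlocks_inj, IsSymm,
    transpose_mul, transpose_transpose]
  simp only [transpose_neg, neg_mul, neg_neg, mul_neg, ← sub_eq_add_neg, sub_eq_zero,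
    add_comm (Bᵀ * B)]
  exact ⟨fun ⟨h, _, hs, _⟩ ↦ ⟨h, hs⟩, fun ⟨h, hs⟩ ↦ ⟨h, hs.symm, hs, h⟩⟩

theorem Matrix.fromBlocks_zero_one_neg_one_zero_mul_self {R : Type*} [Ring R] :
    (fromBlocks 0 1 (-1) 0 : Matrix (n ⊕ n) (n ⊕ n) R) * fromBlocks 0 1 (-1) 0 = -1 := by
  simp [fromBlocks_multiply, ← fromBlocks_one, fromBlocks_neg]

theorem Matrix.commute_fromBlocks_fromBlocks_zero_one_neg_one_zero {R : Type*} [Ring R]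
    (X B : Matrix n n R) :
    Commute (fromBlocks X B (-B) X) (fromBlocks 0 1 (-1) 0) := by
  simp [Commute, SemiconjBy, fromBlocks_multiply]

end Orthosymplectic

theorem stmt_16 (d : ℕ) (X Y : Matrix (Fin d) (Fin d) ℝ) (hY : Y.PosSemidef) :
    let J : Matrix (Fin d ⊕ Fin d) (Fin d ⊕ Fin d) ℝ := Matrix.fromBlocks 0 1 (-1) 0
    (∃ B : Matrix (Fin d) (Fin d) ℝ,
        (Matrix.fromBlocks X B (-B) X)ᵀ * Matrix.fromBlocks X B (-B) X = 1 ∧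
        (Matrix.fromBlocks X B (-B) X)ᵀ * J * Matrix.fromBlocks X B (-B) X = J ∧
        Bᵀ * B = Y) ↔
      (Xᵀ * X + Y = 1 ∧
        ∃ Q : Matrix (Fin d) (Fin d) ℝ, Qᵀ * Q = 1 ∧
          (Xᵀ * Q * hY.sqrt)ᵀ = Xᵀ * Q * hY.sqrt) := by
  intro J
  simp only [J, transpose_mul_mul_self_eq_iff_of_commute fromBlocks_zero_one_neg_one_zero_mul_self
    (commute_fromBlocks_fromBlocks_zero_one_neg_one_zero X _), and_self_left,
    fromBlocks_transpose_mul_self_eq_one_iff]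
  constructor
  · rintro ⟨B, ⟨hXB, hsymm⟩, hBY⟩
    obtain ⟨Q, hQ, rfl⟩ := hY.exists_mul_sqrt_eq hBY
    rw [hBY] at hXB
    rw [← mul_assoc] at hsymm
    exact ⟨hXB, Q, hQ, hsymm⟩
  · rintro ⟨hXY, Q, hQ, hsymm⟩
    have hBY := hY.transpose_mul_self_of_mul_sqrt hQ
    refine ⟨Q * hY.sqrt, ⟨?_, ?_⟩, hBY⟩
    · rwa [hBY]
    · rwa [IsSymm, ← mul_assoc]
end

section
/- Let X = [[0, I_d], [I_d, 0]] and Y = I_{2d} in M_{2d}(ℝ). Then: (a) for every symmetric S ∈ M_{2d}(ℝ) with S + iJ_{2d} ≥ 0, the matrix X^T S X + Y satisfies (X^T S X + Y) + iJ_{2d} ≥ 0; but (b) Y + i(J_{2d} - X^T J_{2d} X) is not positive semidefinite. -/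
/-!
(a) Transposing the Hermitian matrix `S + iJ` conjugates it entrywise, so `S - iJ ≥ 0` as well;
the congruence by the real matrix `X` preserves positivity and turns `S - iJ` into `XᵀSX + iJ`
because `XᵀJX = -J`, and adding `Y = 1 ≥ 0` keeps it positive.
(b) Since `XᵀJX = -J`, the matrix is `1 + 2iJ`, whose principal `2 × 2` submatrix on the
coordinates `inl i, inr i` is `[[1, 2i], [-2i, 1]]`, and that takes the value `-2` at `(1, i)`.
-/

open Matrix
open scoped ComplexOrder

section

variable {n : Type*}

theorem Matrix.map_ofReal_mul [Fintype n] (A B : Matrix n n ℝ) :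
    (A * B).map Complex.ofReal = A.map Complex.ofReal * B.map Complex.ofReal :=
  Matrix.map_mul (f := Complex.ofRealHom)

theorem Matrix.PosSemidef.map_ofReal_sub_I_smul {S J : Matrix n n ℝ} (hS : Sᵀ = S)
    (hJ : Jᵀ = -J) (h : (S.map Complex.ofReal + Complex.I • J.map Complex.ofReal).PosSemidef) :
    (S.map Complex.ofReal - Complex.I • J.map Complex.ofReal).PosSemidef := by
  have h' := h.transpose
  rwa [transpose_add, transpose_smul, ← transpose_map, ← transpose_map, hS, hJ,
    Matrix.map_neg _ Complex.ofReal_neg, smul_neg, ← sub_eq_add_neg] at h'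

theorem Matrix.PosSemidef.map_ofReal_congr_add_I_smul [Fintype n] {S J X Y : Matrix n n ℝ}
    (hS : Sᵀ = S) (hJ : Jᵀ = -J) (hXJX : Xᵀ * J * X = -J)
    (h : (S.map Complex.ofReal + Complex.I • J.map Complex.ofReal).PosSemidef)
    (hY : (Y.map Complex.ofReal).PosSemidef) :
    ((Xᵀ * S * X + Y).map Complex.ofReal + Complex.I • J.map Complex.ofReal).PosSemidef := by
  have hX := (h.map_ofReal_sub_I_smul hS hJ).conjTranspose_mul_mul_same (X.map Complex.ofReal)
  have hXh : (X.map Complex.ofReal)ᴴ = Xᵀ.map Complex.ofReal := by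
    ext; simp
  rw [hXh, Matrix.mul_sub, Matrix.sub_mul, Matrix.mul_smul, Matrix.smul_mul,
    ← map_ofReal_mul, ← map_ofReal_mul, ← map_ofReal_mul, ← map_ofReal_mul, hXJX,
    Matrix.map_neg _ Complex.ofReal_neg, smul_neg, sub_neg_eq_add] at hX
  convert hX.add hY using 1
  rw [Matrix.map_add _ Complex.ofReal_add]
  abel

end

theorem Matrix.not_posSemidef_one_two_I :
    ¬ (!![1, 2 * Complex.I; -(2 * Complex.I), 1]).PosSemidef := by
  intro h
  have h_neg := h.dotProduct_mulVec_nonneg ![1, Complex.I]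
  simp [dotProduct, Fin.sum_univ_two, mulVec] at h_neg
  ring_nf at h_neg
  norm_num [Complex.le_def] at h_neg

theorem Matrix.not_posSemidef_fromBlocks_one_two_I {m : Type*} [Fintype m] [DecidableEq m]
    [Nonempty m] :
    ¬ (fromBlocks 1 ((2 * Complex.I) • 1) (-(2 * Complex.I) • 1) 1 :
      Matrix (m ⊕ m) (m ⊕ m) ℂ).PosSemidef := by
  intro h
  obtain ⟨i⟩ := ‹Nonempty m›
  apply not_posSemidef_one_two_I
  convert h.submatrix ![Sum.inl i, Sum.inr i] using 1
  ext a b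
  fin_cases a <;> fin_cases b <;> simp

theorem stmt_17 (d : ℕ) (hd : 0 < d) :
    let J : Matrix (Fin d ⊕ Fin d) (Fin d ⊕ Fin d) ℝ := Matrix.fromBlocks 0 1 (-1) 0
    let X : Matrix (Fin d ⊕ Fin d) (Fin d ⊕ Fin d) ℝ := Matrix.fromBlocks 0 1 1 0
    let Y : Matrix (Fin d ⊕ Fin d) (Fin d ⊕ Fin d) ℝ := 1
    (∀ S : Matrix (Fin d ⊕ Fin d) (Fin d ⊕ Fin d) ℝ, Sᵀ = S →
      (S.map Complex.ofReal + Complex.I • (J.map Complex.ofReal)).PosSemidef →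
      ((Xᵀ * S * X + Y).map Complex.ofReal + Complex.I • (J.map Complex.ofReal)).PosSemidef) ∧
    ¬ (Y.map Complex.ofReal + Complex.I • ((J - Xᵀ * J * X).map Complex.ofReal)).PosSemidef := by
  intro J X Y
  have hJ : Jᵀ = -J := by simp [J, fromBlocks_transpose, fromBlocks_neg]
  have hXJX : Xᵀ * J * X = -J := by
    simp [J, X, fromBlocks_transpose, fromBlocks_multiply, fromBlocks_neg]
  refine ⟨fun S hS h => h.map_ofReal_congr_add_I_smul hS hJ hXJX ?_, ?_⟩
  · simpa [Y] using PosSemidef.one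
  · have hM : Y.map Complex.ofReal + Complex.I • ((J - Xᵀ * J * X).map Complex.ofReal) =
        fromBlocks 1 ((2 * Complex.I) • 1) (-(2 * Complex.I) • 1) 1 := by
      rw [hXJX, sub_neg_eq_add]
      ext (i | i) (j | j) <;> simp [J, Y, one_apply] <;> split_ifs <;> push_cast <;> ring
    have : Nonempty (Fin d) := ⟨⟨0, hd⟩⟩
    rw [hM]
    exact not_posSemidef_fromBlocks_one_two_I
end
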